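/- arXiv:2002.06802 — 3 statements merged into one kernel-verified Lean document; each statement's English description precedes it below -/
import Mathlib

section
/- For an irrational real number θ, the additive group homomorphism ψ̃ from ℝ to the quotient group T²/S_θ sending t to the class of (0 mod ℤ, t mod ℤ) is surjective, and its kernel is exactly the subgroup ℤ + θℤ of ℝ; consequently ψ̃ induces a group isomorphism ℝ/(ℤ + θℤ) ≅ T²/S_θ. -/
/-- The additive group homomorphism `ℝ →+ T² = (ℝ/ℤ) × (ℝ/ℤ)` sending `t` to
`(t mod ℤ, θ·t mod ℤ)`; its range is the subgroup `S_θ`. -/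
noncomputable def lineHom (θ : ℝ) : ℝ →+ AddCircle (1 : ℝ) × AddCircle (1 : ℝ) :=
  (QuotientAddGroup.mk' (AddSubgroup.zmultiples (1 : ℝ))).prod
    ((QuotientAddGroup.mk' (AddSubgroup.zmultiples (1 : ℝ))).comp (AddMonoidHom.mulLeft θ))

/-- The homomorphism `ψ̃ : ℝ →+ T²/S_θ` sending `t` to the class of `(0 mod ℤ, t mod ℤ)`. -/
noncomputable def psiTilde (θ : ℝ) :
    ℝ →+ (AddCircle (1 : ℝ) × AddCircle (1 : ℝ)) ⧸ (lineHom θ).range :=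
  (QuotientAddGroup.mk' (lineHom θ).range).comp
    ((AddMonoidHom.inr (AddCircle (1 : ℝ)) (AddCircle (1 : ℝ))).comp
      (QuotientAddGroup.mk' (AddSubgroup.zmultiples (1 : ℝ))))

set_option maxHeartbeats 1000000 in
/-- For an irrational `θ`, the map `ψ̃` is surjective with kernel `ℤ + θℤ`;
consequently it induces a group isomorphism `ℝ/(ℤ + θℤ) ≅ T²/S_θ`. -/
theorem stmt_4 (θ : ℝ) (hθ : Irrational θ) :
    Function.Surjective (psiTilde θ) ∧
      (psiTilde θ).ker = AddSubgroup.closure ({1, θ} : Set ℝ) ∧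
      Nonempty ((ℝ ⧸ AddSubgroup.closure ({1, θ} : Set ℝ)) ≃+
        (AddCircle (1 : ℝ) × AddCircle (1 : ℝ)) ⧸ (lineHom θ).range) := by
  have key : ∀ t : ℝ, psiTilde θ t = 0 ↔
      ((0 : AddCircle (1:ℝ)), (QuotientAddGroup.mk t : AddCircle (1:ℝ))) ∈ (lineHom θ).range := by
    intro t
    rw [psiTilde]
    simp only [AddMonoidHom.comp_apply, QuotientAddGroup.mk'_apply, AddMonoidHom.inr_apply]
    exact QuotientAddGroup.eq_zero_iff _
  have hsurj : Function.Surjective (psiTilde θ) := by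
    intro q
    induction q using QuotientAddGroup.induction_on with
    | H p =>
      obtain ⟨x, y⟩ := p
      induction x using QuotientAddGroup.induction_on with
      | H a =>
        induction y using QuotientAddGroup.induction_on with
        | H b =>
          refine ⟨b - θ * a, ?_⟩
          show QuotientAddGroup.mk _ = QuotientAddGroup.mk _
          rw [QuotientAddGroup.eq]
          refine ⟨a, ?_⟩
          simp [lineHom, psiTilde, Prod.ext_iff, QuotientAddGroup.mk_add,
            ← QuotientAddGroup.mk_neg, ← QuotientAddGroup.mk_add]
  have hle : AddSubgroup.closure ({1, θ} : Set ℝ) ≤ (psiTilde θ).ker := by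
    rw [AddSubgroup.closure_le]
    rintro x (rfl | rfl)
    · rw [SetLike.mem_coe, AddMonoidHom.mem_ker, key]
      refine ⟨0, ?_⟩
      simp [lineHom, Prod.ext_iff]
      exact (AddCircle.coe_period (1:ℝ)).symm
    · rw [SetLike.mem_coe, AddMonoidHom.mem_ker, key]
      refine ⟨1, ?_⟩
      simp [lineHom, Prod.ext_iff]
  have hker : (psiTilde θ).ker = AddSubgroup.closure ({1, θ} : Set ℝ) := by
    refine le_antisymm ?_ hle
    intro t ht
    rw [AddMonoidHom.mem_ker, key] at ht
    obtain ⟨s, hs⟩ := ht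
    rw [Prod.ext_iff] at hs
    obtain ⟨hs1, hs2⟩ := hs
    rw [lineHom] at hs1 hs2
    simp only [AddMonoidHom.prod_apply, AddMonoidHom.comp_apply,
      QuotientAddGroup.mk'_apply, AddMonoidHom.mulLeft] at hs1 hs2
    obtain ⟨m, hm⟩ := (QuotientAddGroup.eq_zero_iff _).mp hs1
    rw [QuotientAddGroup.eq] at hs2
    obtain ⟨n, hn⟩ := hs2
    simp only [AddMonoidHom.coe_mk, ZeroHom.coe_mk, zsmul_eq_mul, mul_one] at hm hn
    rw [AddSubgroup.mem_closure_pair]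
    refine ⟨n, m, ?_⟩
    rw [← hm] at hn
    simp only [zsmul_eq_mul, mul_one]
    linarith [hn]
  refine ⟨hsurj, hker, ⟨AddEquiv.trans (QuotientAddGroup.quotientAddEquivOfEq hker.symm)
    (QuotientAddGroup.quotientKerEquivOfSurjective _ hsurj)⟩⟩
end

section
/- The second group cohomology of the group ℤ × ℤ with coefficients in the trivial representation ℝ is isomorphic, as a real vector space, to ℝ (i.e. it is one-dimensional over ℝ). -/
open groupCohomology Multiplicative

namespace Stmt6

abbrev G := Multiplicative (ℤ × ℤ)

def e₁ : G := ofAdd (1, 0)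
def e₂ : G := ofAdd (0, 1)

/-- The antisymmetrization of a 2-cochain. -/
def bb (f : G × G → ℝ) (g h : G) : ℝ := f (g, h) - f (h, g)

section cocycle

variable {f : G × G → ℝ}
  (hf : ∀ g h j : G, f (g * h, j) + f (g, h) = f (h, j) + f (g, h * j))

include hf

lemma bb_mul_left (g h k : G) : bb f (g * h) k = bb f g k + bb f h k := by
  have h1 := hf g h k
  have h2 := hf k g h
  have h3 := hf g k h
  rw [mul_comm k g] at h2
  rw [mul_comm k h] at h3
  simp only [bb]
  linarith

lemma bb_apply_ofAdd (h : G) (m n : ℤ) :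
    bb f (ofAdd (m, n)) h = m • bb f e₁ h + n • bb f e₂ h := by
  let β : ℤ × ℤ →+ ℝ := AddMonoidHom.mk' (fun x => bb f (ofAdd x) h)
    (fun x y => bb_mul_left hf (ofAdd x) (ofAdd y) h)
  have harg : m • ((1 : ℤ), (0 : ℤ)) + n • ((0 : ℤ), (1 : ℤ)) = (m, n) := by
    simp [Prod.ext_iff]
  have h1 : bb f (ofAdd (m, n)) h = β (m • ((1 : ℤ), (0 : ℤ)) + n • ((0 : ℤ), (1 : ℤ))) := by
    rw [harg]; rfl
  rw [h1, map_add, map_zsmul, map_zsmul]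
  rfl

lemma bb_eq_zero (hc : bb f e₁ e₂ = 0) (g h : G) : bb f g h = 0 := by
  have hanti : ∀ u v : G, bb f u v = -(bb f v u) := fun u v => by simp [bb]
  have h11 : bb f e₁ e₁ = 0 := by simp [bb]
  have h22 : bb f e₂ e₂ = 0 := by simp [bb]
  have h21 : bb f e₂ e₁ = 0 := by rw [hanti, hc, neg_zero]
  have key : ∀ v : G, bb f e₁ v = 0 ∧ bb f e₂ v = 0 := by
    intro v
    have hv1 : bb f v e₁ = (toAdd v).1 • bb f e₁ e₁ + (toAdd v).2 • bb f e₂ e₁ :=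
      bb_apply_ofAdd hf e₁ (toAdd v).1 (toAdd v).2
    have hv2 : bb f v e₂ = (toAdd v).1 • bb f e₁ e₂ + (toAdd v).2 • bb f e₂ e₂ :=
      bb_apply_ofAdd hf e₂ (toAdd v).1 (toAdd v).2
    constructor
    · rw [hanti, hv1, h11, h21]; simp
    · rw [hanti, hv2, hc, h22]; simp
  have hg : bb f g h = (toAdd g).1 • bb f e₁ h + (toAdd g).2 • bb f e₂ h :=
    bb_apply_ofAdd hf h (toAdd g).1 (toAdd g).2
  rw [hg, (key h).1, (key h).2]
  simp

end cocycle

/-- Carrier for the central extension of `G` by `ℝ` determined by a cocycle. -/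
structure E' where
  fst : ℝ
  snd : G

def eGroup (f : G × G → ℝ)
    (hf : ∀ g h j : G, f (g * h, j) + f (g, h) = f (h, j) + f (g, h * j))
    (h1 : ∀ g, f (1, g) = 0) (h2 : ∀ g, f (g, 1) = 0)
    (hsym : ∀ g h, f (g, h) = f (h, g)) : CommGroup E' where
  mul a b := ⟨a.1 + b.1 + f (a.2, b.2), a.2 * b.2⟩
  mul_assoc a b c := by
    show E'.mk ((a.1 + b.1 + f (a.2, b.2)) + c.1 + f (a.2 * b.2, c.2)) ((a.2 * b.2) * c.2)
      = E'.mk (a.1 + (b.1 + c.1 + f (b.2, c.2)) + f (a.2, b.2 * c.2)) (a.2 * (b.2 * c.2))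
    have := hf a.2 b.2 c.2
    congr 1
    · linarith
    · exact mul_assoc _ _ _
  one := ⟨0, 1⟩
  one_mul a := by
    show E'.mk (0 + a.1 + f (1, a.2)) (1 * a.2) = a
    rw [h1, one_mul]
    cases a
    congr 1
    simp
  mul_one a := by
    show E'.mk (a.1 + 0 + f (a.2, 1)) (a.2 * 1) = a
    rw [h2, mul_one]
    cases a
    congr 1
    simp
  inv a := ⟨-a.1 - f (a.2, a.2⁻¹), a.2⁻¹⟩
  inv_mul_cancel a := by
    show E'.mk ((-a.1 - f (a.2, a.2⁻¹)) + a.1 + f (a.2⁻¹, a.2)) (a.2⁻¹ * a.2) = E'.mk 0 1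
    congr 1
    · rw [hsym a.2⁻¹ a.2]; ring
    · exact inv_mul_cancel _
  mul_comm a b := by
    show E'.mk (a.1 + b.1 + f (a.2, b.2)) (a.2 * b.2) = E'.mk (b.1 + a.1 + f (b.2, a.2)) (b.2 * a.2)
    congr 1
    · rw [hsym a.2 b.2]; ring
    · exact mul_comm _ _

lemma normalized_symm_coboundary (f : G × G → ℝ)
    (hf : ∀ g h j : G, f (g * h, j) + f (g, h) = f (h, j) + f (g, h * j))
    (h1 : ∀ g, f (1, g) = 0) (h2 : ∀ g, f (g, 1) = 0)
    (hsym : ∀ g h, f (g, h) = f (h, g)) :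
    ∃ x : G → ℝ, ∀ g h : G, x h - x (g * h) + x g = f (g, h) := by
  letI := eGroup f hf h1 h2 hsym
  let π : E' →* G := { toFun := E'.snd, map_one' := rfl, map_mul' := fun _ _ => rfl }
  let u₁ : E' := ⟨0, e₁⟩
  let u₂ : E' := ⟨0, e₂⟩
  let s : G → E' := fun g => u₁ ^ (toAdd g).1 * u₂ ^ (toAdd g).2
  have hπ : ∀ g, (s g).snd = g := by
    intro g
    show π (u₁ ^ (toAdd g).1 * u₂ ^ (toAdd g).2) = g
    rw [map_mul, map_zpow, map_zpow]
    show e₁ ^ (toAdd g).1 * e₂ ^ (toAdd g).2 = g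
    apply toAdd.injective
    rw [toAdd_mul, toAdd_zpow, toAdd_zpow]
    show (toAdd g).1 • ((1 : ℤ), (0 : ℤ)) + (toAdd g).2 • ((0 : ℤ), (1 : ℤ)) = toAdd g
    simp [Prod.ext_iff]
  have hs : ∀ g h, s g * s h = s (g * h) := by
    intro g h
    show (u₁ ^ (toAdd g).1 * u₂ ^ (toAdd g).2) * (u₁ ^ (toAdd h).1 * u₂ ^ (toAdd h).2)
        = u₁ ^ ((toAdd g).1 + (toAdd h).1) * u₂ ^ ((toAdd g).2 + (toAdd h).2)
    rw [zpow_add, zpow_add, mul_mul_mul_comm]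
  refine ⟨fun g => -(s g).fst, ?_⟩
  intro g h
  have hcomp : (s g).fst + (s h).fst + f ((s g).snd, (s h).snd) = (s (g * h)).fst :=
    congrArg E'.fst (hs g h)
  rw [hπ g, hπ h] at hcomp
  show -(s h).fst - -(s (g * h)).fst + -(s g).fst = f (g, h)
  linarith

lemma symm_coboundary (f : G × G → ℝ)
    (hf : ∀ g h j : G, f (g * h, j) + f (g, h) = f (h, j) + f (g, h * j))
    (hsym : ∀ g h, f (g, h) = f (h, g)) :
    ∃ x : G → ℝ, ∀ g h : G, x h - x (g * h) + x g = f (g, h) := by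
  set c := f (1, 1) with hc
  have hone1 : ∀ g : G, f (1, g) = c := by
    intro g
    have := hf 1 1 g
    simp only [one_mul] at this
    linarith
  have hone2 : ∀ g : G, f (g, 1) = c := by
    intro g
    have := hf g 1 1
    simp only [mul_one] at this
    linarith
  set f' : G × G → ℝ := fun p => f p - c with hf'
  have hf'c : ∀ g h j : G, f' (g * h, j) + f' (g, h) = f' (h, j) + f' (g, h * j) := by
    intro g h j
    have := hf g h j
    simp only [hf']
    linarith
  obtain ⟨x, hx⟩ := normalized_symm_coboundary f' hf'c
    (fun g => by simp only [hf', hone1 g, sub_self])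
    (fun g => by simp only [hf', hone2 g, sub_self])
    (fun g h => by simp only [hf', hsym g h])
  refine ⟨fun g => x g + c, fun g h => ?_⟩
  have := hx g h
  simp only [hf'] at this
  show (x h + c) - (x (g * h) + c) + (x g + c) = f (g, h)
  linarith

section main

noncomputable abbrev A : Rep ℝ G := Rep.trivial ℝ G ℝ

noncomputable abbrev B2 : Submodule ℝ (cocycles₂ A) := (coboundaries₂ A).comap (cocycles₂ A).subtype

lemma mem_B2_iff (f : cocycles₂ A) :
    f ∈ B2 ↔ ∃ x : G → ℝ, ∀ g h : G, A.ρ g (x h) - x (g * h) + x g = f (g, h) := by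
  show (f : G × G → ℝ) ∈ LinearMap.range (d₁₂ A).hom ↔ _
  constructor
  · rintro ⟨x, hx⟩
    exact ⟨x, fun g h => by rw [← hx]; simp [d₁₂_hom_apply]⟩
  · rintro ⟨x, hx⟩
    exact ⟨x, funext fun p => by rw [← hx p.1 p.2]; simp [d₁₂_hom_apply]⟩

lemma cocycle_identity (f : cocycles₂ A) :
    ∀ g h j : G, (f : G × G → ℝ) (g * h, j) + f (g, h) = f (h, j) + f (g, h * j) := by
  intro g h j
  have := (mem_cocycles₂_iff (A := A) (f : G × G → ℝ)).1 f.2 g h j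
  simpa [Rep.trivial_ρ_apply, Representation.trivial_apply] using this

/-- The alternation functional on 2-cocycles. -/
noncomputable def Φ : cocycles₂ A →ₗ[ℝ] ℝ where
  toFun f := f.1 (e₁, e₂) - f.1 (e₂, e₁)
  map_add' x y := by
    show (x.1 (e₁, e₂) + y.1 (e₁, e₂)) - (x.1 (e₂, e₁) + y.1 (e₂, e₁))
      = (x.1 (e₁, e₂) - x.1 (e₂, e₁)) + (y.1 (e₁, e₂) - y.1 (e₂, e₁))
    abel
  map_smul' r x := by
    show r • x.1 (e₁, e₂) - r • x.1 (e₂, e₁) = r • (x.1 (e₁, e₂) - x.1 (e₂, e₁))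
    rw [smul_sub]

lemma Φ_ker : B2 ≤ LinearMap.ker Φ := by
  intro x hx
  rw [mem_B2_iff] at hx
  obtain ⟨y, hy⟩ := hx
  have h12 := hy e₁ e₂
  have h21 := hy e₂ e₁
  simp only [Rep.trivial_ρ_apply, Representation.trivial_apply] at h12 h21
  rw [LinearMap.mem_ker]
  show x.1 (e₁, e₂) - x.1 (e₂, e₁) = 0
  rw [cocycles₂.val_eq_coe, ← h12, ← h21, mul_comm e₁ e₂]
  abel

lemma Φ_zero_coboundary (f : cocycles₂ A) (h : Φ f = 0) : f ∈ B2 := by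
  have hf := cocycle_identity f
  have hc : bb (f : G × G → ℝ) e₁ e₂ = 0 := h
  have hsym : ∀ g h : G, (f : G × G → ℝ) (g, h) = (f : G × G → ℝ) (h, g) := by
    intro g h
    have := bb_eq_zero hf hc g h
    simp only [bb] at this
    exact sub_eq_zero.mp this
  obtain ⟨x, hx⟩ := symm_coboundary (f : G × G → ℝ) hf hsym
  rw [mem_B2_iff]
  exact ⟨x, fun g h => by simpa [Rep.trivial_ρ_apply, Representation.trivial_apply] using hx g h⟩

/-- The standard bilinear 2-cocycle. -/
noncomputable def βc : cocycles₂ A := by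
  refine ⟨fun p => ((toAdd p.1).1 : ℝ) * ((toAdd p.2).2 : ℝ), ?_⟩
  rw [mem_cocycles₂_iff]
  intro g h j
  show (((toAdd g).1 + (toAdd h).1 : ℤ) : ℝ) * ((toAdd j).2 : ℝ)
      + ((toAdd g).1 : ℝ) * ((toAdd h).2 : ℝ)
    = _
  simp only [Rep.trivial_ρ_apply, Representation.trivial_apply]
  show _ = ((toAdd h).1 : ℝ) * ((toAdd j).2 : ℝ)
      + ((toAdd g).1 : ℝ) * (((toAdd h).2 + (toAdd j).2 : ℤ) : ℝ)
  push_cast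
  ring

lemma Φ_βc : Φ βc = 1 := by
  show ((1 : ℤ) : ℝ) * ((1 : ℤ) : ℝ) - ((0 : ℤ) : ℝ) * ((0 : ℤ) : ℝ) = 1
  norm_num

lemma range_le_B2 : LinearMap.range (shortComplexH2 A).moduleCatToCycles ≤ B2 := by
  rintro _ ⟨y, rfl⟩
  exact ⟨y, rfl⟩

noncomputable def ψ : (LinearMap.ker (shortComplexH2 A).g.hom ⧸
    LinearMap.range (shortComplexH2 A).moduleCatToCycles) →ₗ[ℝ] ℝ :=
  (LinearMap.range (shortComplexH2 A).moduleCatToCycles).liftQ Φ (le_trans range_le_B2 Φ_ker)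

lemma ψ_bij : Function.Bijective ψ := by
  constructor
  · rw [← LinearMap.ker_eq_bot, LinearMap.ker_eq_bot']
    intro m hm
    obtain ⟨z, rfl⟩ := (LinearMap.range (shortComplexH2 A).moduleCatToCycles).mkQ_surjective m
    have : Φ z = 0 := hm
    rw [Submodule.mkQ_apply, Submodule.Quotient.mk_eq_zero]
    obtain ⟨y, hy⟩ := Φ_zero_coboundary z this
    exact ⟨y, Subtype.ext hy⟩
  · intro r
    refine ⟨Submodule.Quotient.mk (r • βc), ?_⟩
    show Φ (r • βc) = r
    rw [map_smul, Φ_βc]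
    simp

end main

end Stmt6

/-- `H²(ℤ × ℤ; ℝ)` with trivial coefficients is one-dimensional, i.e. isomorphic to
`ℝ` as a real vector space. -/
theorem stmt_6 :
    Nonempty ((groupCohomology (Rep.trivial ℝ (Multiplicative (ℤ × ℤ)) ℝ) 2) ≃ₗ[ℝ] ℝ) := by
  exact ⟨LinearEquiv.trans (groupCohomology.H2Iso Stmt6.A).toLinearEquiv
    (LinearEquiv.ofBijective Stmt6.ψ Stmt6.ψ_bij)⟩
end

section
/- Let F, E, B be topological spaces such that E is the total space of a fiber bundle over B with fiber F, where B is a topological manifold (locally Euclidean, Hausdorff, second countable) and F is contractible. Then the bundle projection admits a continuous global section, i.e. there is a continuous map s : B → E with π ∘ s = id_B. -/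
open Set Filter Topology



theorem loc_cpt {B : Type*} [TopologicalSpace B]
    (hlocEucl : ∀ b : B, ∃ (n : ℕ) (U : Set B) (V : Set (Fin n → ℝ)),
      b ∈ U ∧ IsOpen U ∧ IsOpen V ∧ Nonempty (U ≃ₜ V)) :
    LocallyCompactSpace B := by
  constructor
  intro x n hn
  obtain ⟨m, U, V, hxU, hU, hV, ⟨h⟩⟩ := hlocEucl x
  haveI : LocallyCompactSpace V := hV.locallyCompactSpace
  haveI : LocallyCompactSpace U := h.locallyCompactSpace_iff.mpr inferInstance
  have hemb : Topology.IsOpenEmbedding ((↑) : U → B) := hU.isOpenEmbedding_subtypeVal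
  have hmap : Filter.map ((↑) : U → B) (𝓝 (⟨x, hxU⟩ : U)) = 𝓝 x := by
    rw [hemb.map_nhds_eq]
  have hn' : ((↑) : U → B) ⁻¹' n ∈ 𝓝 (⟨x, hxU⟩ : U) :=
    continuous_subtype_val.continuousAt.preimage_mem_nhds (by exact hn)
  obtain ⟨s, hs, hsn, hsc⟩ := local_compact_nhds hn'
  refine ⟨((↑) : U → B) '' s, ?_, ?_, hsc.image continuous_subtype_val⟩
  · rw [← hmap, mem_map]
    exact mem_of_superset hs (subset_preimage_image _ _)
  · exact image_subset_iff.2 hsn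



lemma glue_step {F E B : Type*} [TopologicalSpace F] [TopologicalSpace E] [TopologicalSpace B]
    {π : E → B} (e : Bundle.Trivialization F π) {c : F}
    (H : ContinuousMap.Homotopy (ContinuousMap.id F) (ContinuousMap.const F c))
    (ψ : C(B, ℝ)) (hψ0 : ∀ x, 0 ≤ ψ x) (hψ1 : ∀ x, ψ x ≤ 1)
    (hsupp : tsupport ψ ⊆ e.baseSet)
    {W : Set B} (hWo : IsOpen W) (hW1 : ∀ x ∈ W, ψ x = 1) (hWU : W ⊆ e.baseSet)
    {A : Set B} (hA : IsOpen A) (s : B → E) (hs : ContinuousOn s A)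
    (hπs : ∀ x ∈ A, π (s x) = x) :
    ∃ s' : B → E, ContinuousOn s' (A ∪ W) ∧ (∀ x ∈ A ∪ W, π (s' x) = x) ∧
      ∀ x ∈ A \ tsupport ψ, s' x = s x := by
  classical
  set t : B → unitInterval := fun x => Set.projIcc 0 1 zero_le_one (ψ x) with ht
  have htcont : Continuous t := continuous_projIcc.comp ψ.continuous
  set g : B → F := fun x => if hx : x ∈ A then (e (s x)).2 else c with hg
  set s' : B → E := fun x =>
    if x ∈ e.baseSet then e.toPartialHomeomorph.symm (x, H (t x, g x)) else s x with hs'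
  -- source membership for s x when x ∈ A ∩ baseSet
  have hsource : ∀ x ∈ A ∩ e.baseSet, s x ∈ e.source := by
    intro x hx
    rw [e.mem_source, hπs x hx.1]
    exact hx.2
  -- agreement off the support
  have hagree : ∀ x ∈ A \ tsupport ψ, s' x = s x := by
    intro x hx
    by_cases hxb : x ∈ e.baseSet
    · have hψx : ψ x = 0 := by
        by_contra h
        exact hx.2 (subset_tsupport ψ (by simpa [Function.mem_support] using h))
      have ht0 : t x = 0 := by
        ext
        simp [ht, hψx, Set.projIcc_left]
      have hgx : g x = (e (s x)).2 := by simp [hg, hx.1]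
      simp only [hs', if_pos hxb, ht0, hgx, H.apply_zero, ContinuousMap.id_apply]
      have := e.symm_apply_mk_proj (hsource x ⟨hx.1, hxb⟩)
      rwa [hπs x hx.1] at this
    · simp [hs', hxb]
  refine ⟨s', ?_, ?_, hagree⟩
  · -- continuity
    have hcA : ∀ x ∈ A ∪ W, ContinuousAt s' x := by
      intro x hx
      rcases hx with hxA | hxW
      · by_cases hxb : x ∈ e.baseSet
        · -- x ∈ A ∩ baseSet : s' given by the homotopy formula
          have hAB : IsOpen (A ∩ e.baseSet) := hA.inter e.open_baseSet
          have hgc : ContinuousOn (fun y => (e (s y)).2) (A ∩ e.baseSet) := by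
            have he : ContinuousOn (⇑e) e.source := by
              rw [← e.coe_coe]; exact e.toPartialHomeomorph.continuousOn
            have h1 : ContinuousOn (⇑e ∘ s) (A ∩ e.baseSet) :=
              he.comp (hs.mono inter_subset_left) fun y hy => hsource y hy
            exact h1.snd
          have hHc : ContinuousOn (fun y => H (t y, g y)) (A ∩ e.baseSet) := by
            have : ContinuousOn (fun y => H (t y, (e (s y)).2)) (A ∩ e.baseSet) :=
              H.continuous.comp_continuousOn
                ((htcont.continuousOn).prodMk hgc)
            exact this.congr fun y hy => by simp [hg, hy.1]
          have hform : ContinuousOn (fun y => e.toPartialHomeomorph.symm (y, H (t y, g y)))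
              (A ∩ e.baseSet) := by
            apply e.toPartialHomeomorph.continuousOn_symm.comp
              ((continuousOn_id.prodMk hHc))
            intro y hy
            exact e.mem_target.2 hy.2
          have heq : EqOn s' (fun y => e.toPartialHomeomorph.symm (y, H (t y, g y)))
              (A ∩ e.baseSet) := fun y hy => by simp [hs', hy.2]
          exact (hform.congr heq).continuousAt (hAB.mem_nhds ⟨hxA, hxb⟩)
        · -- x ∈ A, not in the base set : s' = s near x
          have hxt : x ∉ tsupport ψ := fun h => hxb (hsupp h)
          have hO : IsOpen (A \ tsupport ψ) := hA.sdiff (isClosed_tsupport ψ)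
          have : EqOn s' s (A \ tsupport ψ) := fun y hy => hagree y hy
          exact ((hs.mono diff_subset).congr this).continuousAt
            (hO.mem_nhds ⟨hxA, hxt⟩)
      · -- x ∈ W : s' is the constant-c section there
        have heq : EqOn s' (fun y => e.toPartialHomeomorph.symm (y, c)) W := by
          intro y hy
          have hyb : y ∈ e.baseSet := hWU hy
          have ht1 : t y = 1 := by
            ext
            simp [ht, hW1 y hy, Set.projIcc_right]
          simp only [hs', if_pos hyb, ht1, H.apply_one, ContinuousMap.const_apply]
        have hform : ContinuousOn (fun y => e.toPartialHomeomorph.symm (y, c)) W := by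
          apply e.toPartialHomeomorph.continuousOn_symm.comp
            ((continuousOn_id.prodMk continuousOn_const))
          intro y hy
          exact e.mem_target.2 (hWU hy)
        exact ((hform.congr heq)).continuousAt (hWo.mem_nhds hxW)
    intro x hx
    exact (hcA x hx).continuousWithinAt
  · intro x hx
    by_cases hxb : x ∈ e.baseSet
    · simp only [hs', if_pos hxb]
      exact e.proj_symm_apply (e.mem_target.2 hxb)
    · have hxA : x ∈ A := hx.resolve_right fun h => hxb (hWU h)
      simp only [hs', if_neg hxb]
      exact hπs x hxA

/-- A fiber bundle `π : E → B` with contractible fiber `F` over a topological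
manifold `B` (locally Euclidean, Hausdorff, second countable) admits a continuous
global section. -/
theorem stmt_13 {F E B : Type*} [TopologicalSpace F] [TopologicalSpace E] [TopologicalSpace B]
    (π : E → B) (hcont : Continuous π) (hsurj : Function.Surjective π)
    (htriv : ∀ b : B, ∃ e : Bundle.Trivialization F π, b ∈ e.baseSet)
    (hT2 : T2Space B) (hsec : SecondCountableTopology B)
    (hlocEucl : ∀ b : B, ∃ (n : ℕ) (U : Set B) (V : Set (Fin n → ℝ)),
      b ∈ U ∧ IsOpen U ∧ IsOpen V ∧ Nonempty (U ≃ₜ V))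
    (hF : ContractibleSpace F) :
    ∃ s : B → E, Continuous s ∧ π ∘ s = id := by
  classical
  haveI := hT2; haveI := hsec; haveI := hF
  by_cases hBe : IsEmpty B
  · refine ⟨fun b => ((hBe.elim b : False)).elim, ?_, ?_⟩
    · exact continuous_iff_continuousAt.mpr fun b => ((hBe.elim b : False)).elim
    · exact funext fun b => ((hBe.elim b : False)).elim
  haveI : Nonempty B := not_isEmpty_iff.mp hBe
  obtain ⟨b₀⟩ := ‹Nonempty B›
  obtain ⟨e₀, he₀⟩ := hsurj b₀
  -- contraction of the fiber
  obtain ⟨c, hHc⟩ := id_nullhomotopic F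
  obtain ⟨H⟩ := hHc
  -- instances on B
  haveI : LocallyCompactSpace B := loc_cpt hlocEucl
  haveI : SigmaCompactSpace B := inferInstance
  haveI : ParacompactSpace B := inferInstance
  haveI : NormalSpace B := inferInstance
  -- countable trivializing cover
  have htriv' : ∀ b : B, ∃ e : Bundle.Trivialization F π, b ∈ e.baseSet := htriv
  choose tr htr using htriv'
  obtain ⟨T, hTc, hTU⟩ := TopologicalSpace.isOpen_iUnion_countable (fun b => (tr b).baseSet)
    (fun b => (tr b).open_baseSet)
  have hTne : T.Nonempty := by
    rcases T.eq_empty_or_nonempty with h | h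
    · exfalso
      have : b₀ ∈ ⋃ b, (tr b).baseSet := mem_iUnion.2 ⟨b₀, htr b₀⟩
      rw [← hTU, h] at this
      simpa using this
    · exact h
  obtain ⟨f, hf⟩ := hTc.exists_eq_range hTne
  -- the ℕ-indexed trivializations
  set ee : ℕ → Bundle.Trivialization F π := fun n => tr (f n) with hee
  have hcover : (⋃ n, (ee n).baseSet) = univ := by
    apply eq_univ_of_forall
    intro x
    have hx : x ∈ ⋃ b, (tr b).baseSet := mem_iUnion.2 ⟨x, htr x⟩
    rw [← hTU] at hx
    obtain ⟨b, hbT, hxb⟩ := by simpa using hx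
    rw [hf] at hbT
    obtain ⟨n, rfl⟩ := hbT
    exact mem_iUnion.2 ⟨n, hxb⟩
  -- bump covering
  obtain ⟨ψ, hψ⟩ := BumpCovering.exists_isSubordinate (s := (univ : Set B)) isClosed_univ
    (fun n => (ee n).baseSet) (fun n => (ee n).open_baseSet) (by rw [hcover])
  -- the open sets where ψ n = 1
  set W : ℕ → Set B := fun n => interior {x | ψ n x = 1} with hW
  have hWo : ∀ n, IsOpen (W n) := fun n => isOpen_interior
  have hW1 : ∀ n, ∀ x ∈ W n, ψ n x = 1 := by
    intro n x hx
    exact (interior_subset hx : x ∈ {x | (ψ n) x = 1})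
  have hWsub : ∀ n, W n ⊆ (ee n).baseSet := by
    intro n x hx
    apply hψ n
    apply subset_tsupport
    simp only [Function.mem_support, hW1 n x hx]
    norm_num
  have hWcover : ∀ x : B, ∃ n, x ∈ W n := by
    intro x
    obtain ⟨n, hn⟩ := ψ.eventuallyEq_one' x (mem_univ x)
    refine ⟨n, ?_⟩
    rw [hW, mem_interior_iff_mem_nhds]
    filter_upwards [hn] with y hy using hy
  -- increasing union
  set A : ℕ → Set B := fun n => ⋃ i, ⋃ (_ : i < n), W i with hA
  have hAo : ∀ n, IsOpen (A n) := fun n => isOpen_iUnion fun i => isOpen_iUnion fun _ => hWo i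
  have hAmono : ∀ {m n : ℕ}, m ≤ n → A m ⊆ A n := by
    intro m n hmn
    exact iUnion_mono fun i => iUnion_subset fun hi => subset_iUnion_of_subset (lt_of_lt_of_le hi hmn) (subset_refl _)
  have hAsucc : ∀ n, A (n + 1) = A n ∪ W n := by
    intro n
    ext x
    simp only [hA, mem_iUnion, mem_union, Nat.lt_succ_iff_lt_or_eq]
    constructor
    · rintro ⟨i, hi | rfl, hx⟩
      · exact Or.inl ⟨i, hi, hx⟩
      · exact Or.inr hx
    · rintro (⟨i, hi, hx⟩ | hx)
      · exact ⟨i, Or.inl hi, hx⟩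
      · exact ⟨n, Or.inr rfl, hx⟩
  -- the key gluing step
  have key : ∀ n (s : B → E), ContinuousOn s (A n) → (∀ x ∈ A n, π (s x) = x) →
      ∃ s' : B → E, ContinuousOn s' (A (n + 1)) ∧ (∀ x ∈ A (n + 1), π (s' x) = x) ∧
        ∀ x ∈ A n \ tsupport (ψ n), s' x = s x := by
    intro n s hs hπs
    obtain ⟨s', h1, h2, h3⟩ := glue_step (ee n) H (ψ n) (fun x => ψ.nonneg n x)
      (fun x => ψ.le_one n x) (hψ n) (hWo n) (hW1 n) (hWsub n) (hAo n) s hs hπs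
    rw [← hAsucc n] at h1 h2
    exact ⟨s', h1, h2, h3⟩
  -- recursively glue sections
  let T : ℕ → Type _ := fun n => {s : B → E // ContinuousOn s (A n) ∧ ∀ x ∈ A n, π (s x) = x}
  have hA0 : A 0 = ∅ := by simp [hA]
  have base : T 0 := ⟨fun _ => e₀, by rw [hA0]; exact ⟨continuousOn_empty _, fun x hx => hx.elim⟩⟩
  let step : ∀ n, T n → T (n + 1) := fun n sn =>
    ⟨(key n sn.1 sn.2.1 sn.2.2).choose, (key n sn.1 sn.2.1 sn.2.2).choose_spec.1,
      (key n sn.1 sn.2.1 sn.2.2).choose_spec.2.1⟩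
  let R : ∀ n, T n := fun n => Nat.rec base step n
  have hagree : ∀ n, ∀ x ∈ A n \ tsupport (ψ n), (R (n + 1)).1 x = (R n).1 x := fun n =>
    (key n (R n).1 (R n).2.1 (R n).2.2).choose_spec.2.2
  -- stabilization on neighborhoods
  have loc : ∀ x : B, ∃ (N : ℕ) (O : Set B), IsOpen O ∧ x ∈ O ∧ O ⊆ A N ∧
      ∀ n, N ≤ n → ∀ y ∈ O, (R (n + 1)).1 y = (R n).1 y := by
    intro x
    obtain ⟨O₁, hO₁n, hfin⟩ := ψ.locallyFinite x
    obtain ⟨n₀, hn₀⟩ := hWcover x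
    obtain ⟨N₁, hN₁⟩ := hfin.bddAbove
    set N := max (N₁ + 1) (n₀ + 1) with hN
    refine ⟨N, interior O₁ ∩ W n₀, isOpen_interior.inter (hWo n₀),
      ⟨mem_interior_iff_mem_nhds.2 hO₁n, hn₀⟩, ?_, ?_⟩
    · intro y hy
      exact hAmono (le_max_right _ _) (mem_iUnion.2 ⟨n₀, mem_iUnion.2 ⟨Nat.lt_succ_self n₀, hy.2⟩⟩)
    · intro n hn y hy
      apply hagree
      constructor
      · exact hAmono (le_trans (le_max_right _ _) hn)
          (mem_iUnion.2 ⟨n₀, mem_iUnion.2 ⟨Nat.lt_succ_self n₀, hy.2⟩⟩)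
      · -- y ∉ tsupport (ψ n) since interior O₁ misses the support of ψ n
        have hdisj : Function.support (ψ n) ∩ O₁ = ∅ := by
          by_contra hne
          have : n ∈ {i | (Function.support (ψ i) ∩ O₁).Nonempty} :=
            nonempty_iff_ne_empty.2 hne
          have := hN₁ this
          omega
        intro hyt
        -- open set interior O₁ is disjoint from support, hence from its closure
        have : y ∈ closure (Function.support (ψ n)) := hyt
        rw [mem_closure_iff] at this
        obtain ⟨z, hz1, hz2⟩ := this (interior O₁) isOpen_interior hy.1
        have hzmem : z ∈ Function.support (ψ n) ∩ O₁ := ⟨hz2, interior_subset hz1⟩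
        rw [hdisj] at hzmem
        exact hzmem
  -- the limit section
  choose Nx Ox hOo hxO hOA hstab using loc
  set sec : B → E := fun x => (R (Nx x)).1 x with hsec'
  -- on Ox x, sec agrees with (R (Nx x)).1
  have hiter : ∀ (x : B) (m n : ℕ), Nx x ≤ m → m ≤ n → ∀ y ∈ Ox x,
      (R n).1 y = (R m).1 y := by
    intro x m n hm hmn
    induction n, hmn using Nat.le_induction with
    | base => intro y _; rfl
    | succ n hn ih =>
      intro y hy
      rw [hstab x n (le_trans hm hn) y hy, ih y hy]
  have hkey : ∀ x : B, ∀ y ∈ Ox x, sec y = (R (Nx x)).1 y := by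
    intro x y hy
    set M := max (Nx x) (Nx y) with hM
    have h1 : (R M).1 y = (R (Nx x)).1 y := hiter x (Nx x) M le_rfl (le_max_left _ _) y hy
    have h2 : (R M).1 y = (R (Nx y)).1 y :=
      hiter y (Nx y) M le_rfl (le_max_right _ _) y (hxO y)
    have hrfl : sec y = (R (Nx y)).1 y := rfl
    rw [hrfl, ← h2, h1]
  refine ⟨sec, ?_, ?_⟩
  · rw [continuous_iff_continuousAt]
    intro x
    have : ContinuousAt (R (Nx x)).1 x := by
      apply ContinuousOn.continuousAt ((R (Nx x)).2.1.mono (hOA x))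
        ((hOo x).mem_nhds (hxO x))
    apply this.congr
    filter_upwards [(hOo x).mem_nhds (hxO x)] with y hy using (hkey x y hy).symm
  · funext x
    have := hkey x x (hxO x)
    rw [Function.comp_apply, this, (R (Nx x)).2.2 x (hOA x (hxO x))]
    rfl
end
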